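/- In a DAG G where Y has out-degree zero, for any parent X_k of Y and any subset S of the remaining parents PA(Y)\{X_k}: in the graph obtained by deleting the outgoing edges of X_k, every path from X_k to Y is blocked by PA(Y)\{X_k}. -/
import Mathlib


/-- A directed graph is acyclic if no vertex reaches itself by a nonempty directed path. -/
def Acyclic {V : Type} (E : V → V → Prop) : Prop := ∀ v, ¬ Relation.TransGen E v v

/-- `p` (a list of vertices) is an (undirected) path from `a` to `b` in the directed graph `E`:
distinct vertices, starting at `a`, ending at `b`, successive vertices adjacent. -/
structure IsPath {V : Type} (E : V → V → Prop) (p : List V) (a b : V) : Prop where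
  nodup : p.Nodup
  head : p.head? = some a
  last : p.getLast? = some b
  adj : ∀ i u v, p[i]? = some u → p[i + 1]? = some v → E u v ∨ E v u

/-- The vertex at (interior) position `i` of the path `p` is a collider: both incident edges
along the path point into it. -/
def ColliderAt {V : Type} (E : V → V → Prop) (p : List V) (i : ℕ) : Prop :=
  ∃ u v w, p[i - 1]? = some u ∧ p[i]? = some v ∧ p[i + 1]? = some w ∧ E u v ∧ E w v

/-- The path `p` is blocked by the set `Z`: some interior vertex is a non-collider in `Z`, or
a collider none of whose descendants (including itself) is in `Z`. -/
def BlockedBy {V : Type} (E : V → V → Prop) (p : List V) (Z : Set V) : Prop :=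
  ∃ i v, 0 < i ∧ i + 1 < p.length ∧ p[i]? = some v ∧
    ((¬ ColliderAt E p i ∧ v ∈ Z) ∨
     (ColliderAt E p i ∧ ∀ d, Relation.ReflTransGen E v d → d ∉ Z))

/-- A backdoor path from `a` to `b`: a path whose first edge points into `a`. -/
def IsBackdoorPath {V : Type} (E : V → V → Prop) (p : List V) (a b : V) : Prop :=
  IsPath E p a b ∧ ∃ u, p[1]? = some u ∧ E u a
/-- In a DAG where `Y` has out-degree zero, for any parent `Xk` of `Y` and any
subset `S` of the remaining parents `PA(Y) \ {Xk}`: in the graph obtained by deleting the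
outgoing edges of `Xk`, every path from `Xk` to `Y` is blocked by `PA(Y) \ {Xk}`. -/
theorem paths_blocked_after_deleting_outgoing {V : Type} (E : V → V → Prop) (Y Xk : V)
    (hacyc : Acyclic E) (hout : ∀ v, ¬ E Y v) (hXk : E Xk Y)
    (S : Set V) (hS : S ⊆ {x | E x Y ∧ x ≠ Xk}) :
    ∀ p : List V, IsPath (fun u v => E u v ∧ u ≠ Xk) p Xk Y →
      BlockedBy (fun u v => E u v ∧ u ≠ Xk) p {x | E x Y ∧ x ≠ Xk} := by
  intro p hp
  obtain ⟨hnodup, hhead, hlast, hadj⟩ := hp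
  have hXkY : Xk ≠ Y := by
    intro h; exact hacyc Y (Relation.TransGen.single (h ▸ hXk))
  have h0 : p[0]? = some Xk := by rwa [← List.head?_eq_getElem?]
  have hlastg : p[p.length - 1]? = some Y := by rwa [← List.getLast?_eq_getElem?]
  have hpos : 0 < p.length := by
    rcases p with _ | ⟨a, t⟩
    · simp at h0
    · simp
  have hlen3 : 3 ≤ p.length := by
    by_contra h
    push_neg at h
    interval_cases hl : p.length
    · norm_num at hlastg
      rw [h0] at hlastg
      exact hXkY (by injection hlastg)
    · norm_num at hlastg
      rcases hadj 0 Xk Y h0 hlastg with ⟨_, hne⟩ | ⟨hYX, _⟩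
      · exact hne rfl
      · exact hout Xk hYX
  set i := p.length - 2 with hi
  have hi1 : i + 1 = p.length - 1 := by omega
  have hi1lt : i + 1 < p.length := by omega
  have hilt : i < p.length := by omega
  have hY : p[i + 1]? = some Y := by rw [hi1]; exact hlastg
  obtain ⟨u, hu⟩ : ∃ u, p[i]? = some u := by
    have := List.getElem?_eq_getElem hilt
    exact ⟨_, this⟩
  have huY : E u Y ∧ u ≠ Xk := by
    rcases hadj i u Y hu hY with h | ⟨hYu, _⟩
    · exact h
    · exact absurd hYu (hout u)
  refine ⟨i, u, by omega, hi1lt, hu, Or.inl ⟨?_, huY⟩⟩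
  rintro ⟨a, v, w, -, hv, hw, -, hwv, -⟩
  rw [hu] at hv; rw [hY] at hw
  cases hv; cases hw
  exact hout u hwv
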